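/- Let φ be a three-dimensional nilpotent complex Jordan algebra with a basis {e₁,e₂,e₃} satisfying φ(e₁,e₁) = e₂ and φ(e₁,e₂) = e₃. Then φ(e₂,e₂) = 0 and e₃ lies in the center, i.e., φ(e₃,y) = 0 for all y. -/

import Mathlib

/-- Bilinearity of a plain product. -/
def IsBilin (K : Type*) [Field K] {V : Type*} [AddCommGroup V] [Module K V]
    (φ : V → V → V) : Prop :=
  (∀ (a : K) (x y z : V), φ (a • x + y) z = a • φ x z + φ y z) ∧
  (∀ (a : K) (x y z : V), φ x (a • y + z) = a • φ x y + φ x z)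

/-- Commutativity (symmetry) of the product. -/
def IsComm {V : Type*} (φ : V → V → V) : Prop := ∀ x y, φ x y = φ y x

/-- The Jordan identity. -/
def JordanId {V : Type*} (φ : V → V → V) : Prop :=
  ∀ x y, φ (φ x x) (φ x y) = φ x (φ (φ x x) y)

/-- Lower central series: `lcs K φ 0 = C¹ = V`, and `lcs K φ m` is the term `C^{m+1}`. -/
def lcs (K : Type*) [Field K] {V : Type*} [AddCommGroup V] [Module K V]
    (φ : V → V → V) : ℕ → Submodule K V
  | 0 => ⊤
  | m + 1 => Submodule.span K {z | ∃ x ∈ lcs K φ m, ∃ y, z = φ x y}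

/-- Nilpotency: some term of the lower central series vanishes. -/
def IsNilp (K : Type*) [Field K] {V : Type*} [AddCommGroup V] [Module K V]
    (φ : V → V → V) : Prop := ∃ k, lcs K φ k = ⊥

/-!
In a nilpotent algebra the lower central series drops in dimension at every step until it
vanishes, so in dimension three `lcs 3 = 0`. Since `e 2 = φ (e 1) (e 0) ∈ lcs 2`, every product
`φ (e 2) y` lies in `lcs 3` and vanishes. The Jordan identity at `x = y = e 0` then gives
`φ (e 1) (e 1) = φ (e 0) (φ (e 1) (e 0)) = φ (e 0) (e 2) = 0`.
-/

section LowerCentralSeries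

variable {K : Type*} [Field K] {V : Type*} [AddCommGroup V] [Module K V] (φ : V → V → V)

lemma mem_lcs_succ {x : V} {m : ℕ} (hx : x ∈ lcs K φ m) (y : V) :
    φ x y ∈ lcs K φ (m + 1) :=
  Submodule.subset_span ⟨x, hx, y, rfl⟩

lemma lcs_succ_le (m : ℕ) : lcs K φ (m + 1) ≤ lcs K φ m := by
  induction m with
  | zero => exact le_top
  | succ n ih =>
    refine Submodule.span_le.2 ?_
    rintro z ⟨x, hx, y, rfl⟩
    exact mem_lcs_succ φ (ih hx) y

lemma lcs_antitone : Antitone (lcs K φ) :=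
  antitone_nat_of_succ_le (lcs_succ_le φ)

lemma lcs_add_eq_of_succ_eq {n : ℕ} (h : lcs K φ (n + 1) = lcs K φ n) (j : ℕ) :
    lcs K φ (n + j) = lcs K φ n := by
  induction j with
  | zero => rfl
  | succ m ih =>
    change Submodule.span K {z | ∃ x ∈ lcs K φ (n + m), ∃ y, z = φ x y} = lcs K φ n
    rw [ih]
    exact h

variable {φ}

lemma IsNilp.lcs_succ_lt (hnilp : IsNilp K φ) {n : ℕ} (hn : lcs K φ n ≠ ⊥) :
    lcs K φ (n + 1) < lcs K φ n := by
  refine (lcs_succ_le φ n).lt_of_ne fun h => ?_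
  obtain ⟨k, hk⟩ := hnilp
  rcases le_total k n with hkn | hnk
  · exact hn (le_bot_iff.1 (hk ▸ lcs_antitone φ hkn))
  · have hstable := lcs_add_eq_of_succ_eq φ h (k - n)
    rw [Nat.add_sub_cancel' hnk, hk] at hstable
    exact hn hstable.symm

lemma IsNilp.finrank_lcs_le [FiniteDimensional K V] (hnilp : IsNilp K φ) (m : ℕ) :
    Module.finrank K (lcs K φ m) ≤ Module.finrank K V - m := by
  induction m with
  | zero => exact Submodule.finrank_le _
  | succ m ih =>
    by_cases hm : lcs K φ m = ⊥
    · have : lcs K φ (m + 1) = ⊥ := le_bot_iff.1 (hm ▸ lcs_succ_le φ m)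
      rw [this, finrank_bot]
      exact Nat.zero_le _
    · have := Submodule.finrank_lt_finrank_of_lt (hnilp.lcs_succ_lt hm)
      omega

lemma IsNilp.lcs_finrank_eq_bot [FiniteDimensional K V] (hnilp : IsNilp K φ) :
    lcs K φ (Module.finrank K V) = ⊥ :=
  Submodule.finrank_eq_zero.1 (by simpa using hnilp.finrank_lcs_le (Module.finrank K V))

end LowerCentralSeries

theorem dim_three_max_char_seq_structure_general
    {V : Type*} [AddCommGroup V] [Module ℂ V] (φ : V → V → V)
    (hcomm : IsComm φ) (hjord : JordanId φ)
    (hnilp : IsNilp ℂ φ) (e : Module.Basis (Fin 3) ℂ V)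
    (h11 : φ (e 0) (e 0) = e 1) (h12 : φ (e 0) (e 1) = e 2) :
    φ (e 1) (e 1) = 0 ∧ ∀ y : V, φ (e 2) y = 0 := by
  have : FiniteDimensional ℂ V := Module.Finite.of_basis e
  have he1 : e 1 ∈ lcs ℂ φ 1 := h11 ▸ mem_lcs_succ φ Submodule.mem_top (e 0)
  have he2 : e 2 ∈ lcs ℂ φ 2 := by
    rw [← h12, hcomm]
    exact mem_lcs_succ φ he1 (e 0)
  have hbot : lcs ℂ φ 3 = ⊥ := by
    simpa [Module.finrank_eq_card_basis e] using hnilp.lcs_finrank_eq_bot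
  have hcent : ∀ y, φ (e 2) y = 0 := fun y =>
    (Submodule.mem_bot ℂ).1 (hbot ▸ mem_lcs_succ φ he2 y)
  refine ⟨?_, hcent⟩
  calc φ (e 1) (e 1) = φ (φ (e 0) (e 0)) (φ (e 0) (e 0)) := by rw [h11]
    _ = φ (e 0) (φ (e 1) (e 0)) := by rw [hjord, h11]
    _ = 0 := by rw [hcomm (e 1), h12, hcomm, hcent]

/-- in a 3-dimensional nilpotent complex Jordan algebra with
φ(e₁,e₁)=e₂ and φ(e₁,e₂)=e₃, one has φ(e₂,e₂)=0 and e₃ is central. -/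
theorem dim_three_max_char_seq_structure
    {V : Type*} [AddCommGroup V] [Module ℂ V] (φ : V → V → V)
    (hbil : IsBilin ℂ φ) (hcomm : IsComm φ) (hjord : JordanId φ)
    (hnilp : IsNilp ℂ φ) (e : Module.Basis (Fin 3) ℂ V)
    (h11 : φ (e 0) (e 0) = e 1) (h12 : φ (e 0) (e 1) = e 2) :
    φ (e 1) (e 1) = 0 ∧ ∀ y : V, φ (e 2) y = 0 :=
  dim_three_max_char_seq_structure_general φ hcomm hjord hnilp e h11 h12
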